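/- arXiv:0810.1235 — 2 statements merged into one kernel-verified Lean document; each statement's English description precedes it below -/
import Mathlib

section
/- Let n ≥ 3, let D ⊂ ℝ² be open and connected, and let z, X, Y, N, e₁, …, e_{n−2} : D → ℝ^{n+1} be smooth maps such that at every point (X, Y, e₁, …, e_{n−2}, N) is an orthonormal system in ℝ^{n+1}, and z_u = √E·X, z_v = √G·Y for smooth positive functions E, G on D. Suppose there are smooth functions γ₁, γ₂, ν, λ₁, …, λ_{n−2} on D with ν > 0 such that the following Frenet-type system holds: X_u = √E(γ₁Y + Σᵢλᵢeᵢ + νN), Y_u = −√E·γ₁X, (eᵢ)_u = −√E·λᵢX, N_u = −√E·νX, X_v = √G·γ₂Y, Y_v = √G(−γ₂X + Σᵢλᵢeᵢ − νN), (eᵢ)_v = −√G·λᵢY, N_v = +√G·νY. Then each λᵢ is constant on D. -/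
open Real Set
open scoped RealInnerProductSpace

noncomputable section

/-- Partial derivative in the first (`u`) direction. -/
def pu {α : Type*} [NormedAddCommGroup α] [NormedSpace ℝ α]
    (f : ℝ × ℝ → α) (p : ℝ × ℝ) : α :=
  fderiv ℝ f p (1, 0)

/-- Partial derivative in the second (`v`) direction. -/
def pv {α : Type*} [NormedAddCommGroup α] [NormedSpace ℝ α]
    (f : ℝ × ℝ → α) (p : ℝ × ℝ) : α :=
  fderiv ℝ f p (0, 1)

/-- The family `(X, Y, e₁, …, e_{n-2}, N)` is an orthonormal system in `ℝ^{n+1}`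
at every point of `D`. -/
def OrthFrame (n : ℕ) (D : Set (ℝ × ℝ))
    (X Y N : ℝ × ℝ → EuclideanSpace ℝ (Fin (n + 1)))
    (e : Fin (n - 2) → ℝ × ℝ → EuclideanSpace ℝ (Fin (n + 1))) : Prop :=
  ∀ p ∈ D,
    ⟪X p, X p⟫ = 1 ∧ ⟪Y p, Y p⟫ = 1 ∧ ⟪N p, N p⟫ = 1 ∧
    ⟪X p, Y p⟫ = 0 ∧ ⟪X p, N p⟫ = 0 ∧ ⟪Y p, N p⟫ = 0 ∧
    (∀ i, ⟪e i p, e i p⟫ = 1 ∧ ⟪X p, e i p⟫ = 0 ∧ ⟪Y p, e i p⟫ = 0 ∧ ⟪N p, e i p⟫ = 0) ∧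
    (∀ i j, i ≠ j → ⟪e i p, e j p⟫ = 0)

lemma fderiv_smul_apply' {F : Type*} [NormedAddCommGroup F] [NormedSpace ℝ F]
    {g : ℝ × ℝ → ℝ} {f : ℝ × ℝ → F} {p : ℝ × ℝ}
    (hg : DifferentiableAt ℝ g p) (hf : DifferentiableAt ℝ f p) (w : ℝ × ℝ) :
    fderiv ℝ (fun q => g q • f q) p w = (fderiv ℝ g p w) • f p + g p • fderiv ℝ f p w := by
  rw [fderiv_fun_smul hg hf]
  simp [add_comm]

lemma fderiv_mul_apply' {g f : ℝ × ℝ → ℝ} {p : ℝ × ℝ}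
    (hg : DifferentiableAt ℝ g p) (hf : DifferentiableAt ℝ f p) (w : ℝ × ℝ) :
    fderiv ℝ (fun q => g q * f q) p w = (fderiv ℝ g p w) * f p + g p * fderiv ℝ f p w := by
  rw [fderiv_fun_mul hg hf]
  simp [add_comm, mul_comm]

lemma mixed_symm {F : Type*} [NormedAddCommGroup F] [NormedSpace ℝ F]
    {D : Set (ℝ × ℝ)} (hD : IsOpen D) {f : ℝ × ℝ → F}
    (hf : ContDiffOn ℝ (⊤ : ℕ∞) f D) {p : ℝ × ℝ} (hp : p ∈ D) :
    pv (pu f) p = pu (pv f) p := by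
  have hat : ContDiffAt ℝ (⊤ : ℕ∞) f p := hf.contDiffAt (hD.mem_nhds hp)
  have hsym := hat.isSymmSndFDerivAt (by rw [minSmoothness_of_isRCLikeNormedField]; exact WithTop.coe_le_coe.2 le_top)
  have hd : DifferentiableAt ℝ (fderiv ℝ f) p :=
    (hat.fderiv_right (m := 1) (by exact WithTop.coe_le_coe.2 le_top)).differentiableAt one_ne_zero
  unfold pu pv
  rw [fderiv_clm_apply hd (differentiableAt_const _),
    fderiv_clm_apply hd (differentiableAt_const _)]
  simpa using hsym (0, 1) (1, 0)

lemma coeff_eq {F : Type*} [NormedAddCommGroup F] [InnerProductSpace ℝ F]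
    {X Y : F} (hX : ⟪X, X⟫ = 1) (hY : ⟪Y, Y⟫ = 1) (hXY : ⟪X, Y⟫ = 0)
    {a b c d : ℝ} (h : a • X + b • Y = c • X + d • Y) : a = c ∧ b = d := by
  have hYX : ⟪Y, X⟫ = (0 : ℝ) := by rw [real_inner_comm]; exact hXY
  have hX0 : X ≠ 0 := by rintro rfl; simp at hX
  have hY0 : Y ≠ 0 := by rintro rfl; simp at hY
  constructor
  · have := congrArg (fun w => ⟪X, w⟫) h
    simpa [inner_add_right, real_inner_smul_right, hX, hXY, hX0] using this
  · have := congrArg (fun w => ⟪Y, w⟫) h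
    simpa [inner_add_right, real_inner_smul_right, hY, hYX, hY0] using this

lemma const_of_fderiv_zero {D : Set (ℝ × ℝ)} (hD : IsOpen D) (hconn : IsPreconnected D)
    {f : ℝ × ℝ → ℝ} (hf : ∀ q ∈ D, DifferentiableAt ℝ f q)
    (h0 : ∀ q ∈ D, fderiv ℝ f q = 0) {p q : ℝ × ℝ} (hp : p ∈ D) (hq : q ∈ D) :
    f p = f q := by
  have hloc : ∀ x ∈ D, ∃ ε > 0, Metric.ball x ε ⊆ D ∧ ∀ y ∈ Metric.ball x ε, f y = f x := by
    intro x hx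
    obtain ⟨ε, hε, hball⟩ := Metric.isOpen_iff.1 hD x hx
    refine ⟨ε, hε, hball, fun y hy => ?_⟩
    have hconv : Convex ℝ (Metric.ball x ε) := convex_ball x ε
    have hdiff : DifferentiableOn ℝ f (Metric.ball x ε) :=
      fun z hz => (hf z (hball hz)).differentiableWithinAt
    refine hconv.is_const_of_fderivWithin_eq_zero hdiff (fun z hz => ?_) hy
      (Metric.mem_ball_self hε)
    rw [fderivWithin_of_isOpen Metric.isOpen_ball hz]
    exact h0 z (hball hz)
  classical
  by_contra hne
  set U : Set (ℝ × ℝ) := {x | x ∈ D ∧ f x = f p} with hU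
  set V : Set (ℝ × ℝ) := {x | x ∈ D ∧ f x ≠ f p} with hV
  have hUo : IsOpen U := by
    rw [Metric.isOpen_iff]
    rintro x ⟨hxD, hxf⟩
    obtain ⟨ε, hε, hbD, hconst⟩ := hloc x hxD
    exact ⟨ε, hε, fun y hy => ⟨hbD hy, (hconst y hy).trans hxf⟩⟩
  have hVo : IsOpen V := by
    rw [Metric.isOpen_iff]
    rintro x ⟨hxD, hxf⟩
    obtain ⟨ε, hε, hbD, hconst⟩ := hloc x hxD
    exact ⟨ε, hε, fun y hy => ⟨hbD hy, by rw [hconst y hy]; exact hxf⟩⟩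
  have hcov : D ⊆ U ∪ V := by
    intro x hx
    by_cases h : f x = f p
    · exact Or.inl ⟨hx, h⟩
    · exact Or.inr ⟨hx, h⟩
  obtain ⟨x, -, ⟨-, hx1⟩, ⟨-, hx2⟩⟩ :=
    hconn U V hUo hVo hcov ⟨p, hp, hp, rfl⟩ ⟨q, hq, hq, fun h => hne h.symm⟩
  exact hx2 hx1

/-- The Frenet-type system (3.12) of an integral surface of the distribution `Δ` of a minimal
hypersurface of type number two with involutive distribution forces all `λᵢ` to be constant. -/
theorem minimal_lambdas_constant
    (n : ℕ) (hn : 3 ≤ n)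
    (D : Set (ℝ × ℝ)) (hD : IsOpen D) (hconn : IsConnected D)
    (z X Y N : ℝ × ℝ → EuclideanSpace ℝ (Fin (n + 1)))
    (e : Fin (n - 2) → ℝ × ℝ → EuclideanSpace ℝ (Fin (n + 1)))
    (Ec Gc γ₁ γ₂ ν : ℝ × ℝ → ℝ) (lam : Fin (n - 2) → ℝ × ℝ → ℝ)
    (hz : ContDiffOn ℝ (⊤ : ℕ∞) z D) (hX : ContDiffOn ℝ (⊤ : ℕ∞) X D) (hY : ContDiffOn ℝ (⊤ : ℕ∞) Y D)
    (hN : ContDiffOn ℝ (⊤ : ℕ∞) N D) (he : ∀ i, ContDiffOn ℝ (⊤ : ℕ∞) (e i) D)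
    (hEc : ContDiffOn ℝ (⊤ : ℕ∞) Ec D) (hGc : ContDiffOn ℝ (⊤ : ℕ∞) Gc D)
    (hγ₁ : ContDiffOn ℝ (⊤ : ℕ∞) γ₁ D) (hγ₂ : ContDiffOn ℝ (⊤ : ℕ∞) γ₂ D)
    (hν : ContDiffOn ℝ (⊤ : ℕ∞) ν D) (hlam : ∀ i, ContDiffOn ℝ (⊤ : ℕ∞) (lam i) D)
    (hEpos : ∀ p ∈ D, 0 < Ec p) (hGpos : ∀ p ∈ D, 0 < Gc p)
    (hνpos : ∀ p ∈ D, 0 < ν p)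
    (horth : OrthFrame n D X Y N e)
    (hzu : ∀ p ∈ D, pu z p = Real.sqrt (Ec p) • X p)
    (hzv : ∀ p ∈ D, pv z p = Real.sqrt (Gc p) • Y p)
    (hXu : ∀ p ∈ D, pu X p =
      Real.sqrt (Ec p) • (γ₁ p • Y p + (∑ i, lam i p • e i p) + ν p • N p))
    (hYu : ∀ p ∈ D, pu Y p = -(Real.sqrt (Ec p) * γ₁ p) • X p)
    (heu : ∀ p ∈ D, ∀ i, pu (e i) p = -(Real.sqrt (Ec p) * lam i p) • X p)
    (hNu : ∀ p ∈ D, pu N p = -(Real.sqrt (Ec p) * ν p) • X p)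
    (hXv : ∀ p ∈ D, pv X p = (Real.sqrt (Gc p) * γ₂ p) • Y p)
    (hYv : ∀ p ∈ D, pv Y p =
      Real.sqrt (Gc p) • ((-(γ₂ p)) • X p + (∑ i, lam i p • e i p) - ν p • N p))
    (hev : ∀ p ∈ D, ∀ i, pv (e i) p = -(Real.sqrt (Gc p) * lam i p) • Y p)
    (hNv : ∀ p ∈ D, pv N p = (Real.sqrt (Gc p) * ν p) • Y p) :
    ∀ p ∈ D, ∀ q ∈ D, ∀ i, lam i p = lam i q := by
  intro p hp q hq i
  have key : ∀ r ∈ D, fderiv ℝ (lam i) r = 0 := by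
    intro r hr
    have hmem := hD.mem_nhds hr
    -- differentiability facts at r
    have hXd : DifferentiableAt ℝ X r := (hX.contDiffAt hmem).differentiableAt (by simp)
    have hYd : DifferentiableAt ℝ Y r := (hY.contDiffAt hmem).differentiableAt (by simp)
    have hlamd : DifferentiableAt ℝ (lam i) r :=
      ((hlam i).contDiffAt hmem).differentiableAt (by simp)
    have hsE : DifferentiableAt ℝ (fun x => Real.sqrt (Ec x)) r :=
      ((Real.contDiffAt_sqrt (hEpos r hr).ne').comp r (hEc.contDiffAt hmem)).differentiableAt
        (by simp)
    have hsG : DifferentiableAt ℝ (fun x => Real.sqrt (Gc x)) r :=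
      ((Real.contDiffAt_sqrt (hGpos r hr).ne').comp r (hGc.contDiffAt hmem)).differentiableAt
        (by simp)
    have hgd : DifferentiableAt ℝ (fun x => Real.sqrt (Ec x) * lam i x) r := hsE.mul hlamd
    have hhd : DifferentiableAt ℝ (fun x => Real.sqrt (Gc x) * lam i x) r := hsG.mul hlamd
    -- orthonormality at r
    obtain ⟨h11, h22, -, h12, -, -, -, -⟩ := horth r hr
    -- abbreviations
    set a := Real.sqrt (Ec r) with ha
    set b := Real.sqrt (Gc r) with hb
    set L := lam i r with hL
    set Pg := fderiv ℝ (fun x => Real.sqrt (Ec x) * lam i x) r (0, 1) with hPg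
    set Ph := fderiv ℝ (fun x => Real.sqrt (Gc x) * lam i x) r (1, 0) with hPh
    set PE := fderiv ℝ (fun x => Real.sqrt (Ec x)) r (0, 1) with hPE
    set PG := fderiv ℝ (fun x => Real.sqrt (Gc x)) r (1, 0) with hPG
    have hXv' : fderiv ℝ X r (0, 1) = (b * γ₂ r) • Y r := hXv r hr
    have hYu' : fderiv ℝ Y r (1, 0) = -(a * γ₁ r) • X r := hYu r hr
    -- mixed partials of e i
    have hLe : pv (pu (e i)) r = (-Pg) • X r + (-((a * L) * (b * γ₂ r))) • Y r := by
      have h1 : fderiv ℝ (pu (e i)) r =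
          fderiv ℝ (fun x => -(Real.sqrt (Ec x) * lam i x) • X x) r :=
        Filter.EventuallyEq.fderiv_eq
          (Filter.eventuallyEq_of_mem hmem (fun x hx => heu x hx i))
      show fderiv ℝ (pu (e i)) r (0, 1) = _
      rw [h1, fderiv_smul_apply' (g := fun x => -(Real.sqrt (Ec x) * lam i x)) hgd.neg hXd (0, 1),
        fderiv_fun_neg, hXv']
      simp only [ContinuousLinearMap.neg_apply, ← hPg, smul_smul]
      module
    have hRe : pu (pv (e i)) r = ((b * L) * (a * γ₁ r)) • X r + (-Ph) • Y r := by
      have h1 : fderiv ℝ (pv (e i)) r =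
          fderiv ℝ (fun x => -(Real.sqrt (Gc x) * lam i x) • Y x) r :=
        Filter.EventuallyEq.fderiv_eq
          (Filter.eventuallyEq_of_mem hmem (fun x hx => hev x hx i))
      show fderiv ℝ (pv (e i)) r (1, 0) = _
      rw [h1, fderiv_smul_apply' (g := fun x => -(Real.sqrt (Gc x) * lam i x)) hhd.neg hYd (1, 0),
        fderiv_fun_neg, hYu']
      simp only [ContinuousLinearMap.neg_apply, ← hPh, smul_smul]
      module
    have hmix := mixed_symm hD (he i) hr
    rw [hLe, hRe] at hmix
    obtain ⟨hE1, hE2⟩ := coeff_eq h11 h22 h12 hmix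
    -- mixed partials of z
    have hLz : pv (pu z) r = PE • X r + (a * (b * γ₂ r)) • Y r := by
      have h1 : fderiv ℝ (pu z) r = fderiv ℝ (fun x => Real.sqrt (Ec x) • X x) r :=
        Filter.EventuallyEq.fderiv_eq (Filter.eventuallyEq_of_mem hmem (fun x hx => hzu x hx))
      show fderiv ℝ (pu z) r (0, 1) = _
      rw [h1, fderiv_smul_apply' hsE hXd (0, 1), hXv']
      simp only [← hPE, smul_smul]
      rw [ha]
    have hRz : pu (pv z) r = (b * -(a * γ₁ r)) • X r + PG • Y r := by
      have h1 : fderiv ℝ (pv z) r = fderiv ℝ (fun x => Real.sqrt (Gc x) • Y x) r :=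
        Filter.EventuallyEq.fderiv_eq (Filter.eventuallyEq_of_mem hmem (fun x hx => hzv x hx))
      show fderiv ℝ (pv z) r (1, 0) = _
      rw [h1, fderiv_smul_apply' hsG hYd (1, 0), hYu']
      simp only [← hPG, smul_smul]
      module
    have hmixz := mixed_symm hD hz hr
    rw [hLz, hRz] at hmixz
    obtain ⟨hE3, hE4⟩ := coeff_eq h11 h22 h12 hmixz
    -- product rules
    have hPg' : Pg = PE * L + a * fderiv ℝ (lam i) r (0, 1) :=
      fderiv_mul_apply' hsE hlamd (0, 1)
    have hPh' : Ph = PG * L + b * fderiv ℝ (lam i) r (1, 0) :=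
      fderiv_mul_apply' hsG hlamd (1, 0)
    have hapos : 0 < a := Real.sqrt_pos.2 (hEpos r hr)
    have hbpos : 0 < b := Real.sqrt_pos.2 (hGpos r hr)
    have hv0 : fderiv ℝ (lam i) r (0, 1) = 0 := by
      have h : a * fderiv ℝ (lam i) r (0, 1) = 0 := by
        linear_combination -hE1 - hPg' - L * hE3
      exact (mul_eq_zero.mp h).resolve_left hapos.ne'
    have hu0 : fderiv ℝ (lam i) r (1, 0) = 0 := by
      have h : b * fderiv ℝ (lam i) r (1, 0) = 0 := by
        linear_combination hE2 - hPh' + L * hE4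
      exact (mul_eq_zero.mp h).resolve_left hbpos.ne'
    apply ContinuousLinearMap.ext
    intro w
    have hw : w = w.1 • ((1 : ℝ), (0 : ℝ)) + w.2 • ((0 : ℝ), (1 : ℝ)) := by
      simp [Prod.ext_iff]
    rw [hw, map_add, map_smul, map_smul, hu0, hv0]
    simp
  exact const_of_fderiv_zero hD hconn.isPreconnected
    (fun s hs => ((hlam i).contDiffAt (hD.mem_nhds hs)).differentiableAt (by simp))
    key hp hq
end
end

section
/- Under the hypotheses of the minimal Frenet system — n ≥ 3, D ⊂ ℝ² open connected, smooth maps z, X, Y, N, e₁, …, e_{n−2} : D → ℝ^{n+1} with (X, Y, e₁, …, e_{n−2}, N) orthonormal at every point, z_u = √E·X, z_v = √G·Y (E, G > 0 smooth), and smooth γ₁, γ₂, ν > 0 and constants λᵢ = cᵢ satisfying X_u = √E(γ₁Y + Σᵢcᵢeᵢ + νN), Y_u = −√E·γ₁X, (eᵢ)_u = −√E·cᵢX, N_u = −√E·νX, X_v = √G·γ₂Y, Y_v = √G(−γ₂X + Σᵢcᵢeᵢ − νN), (eᵢ)_v = −√G·cᵢY, N_v = +√G·νY — assume c² := Σᵢcᵢ²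 > 0 and set b := (1/c)Σᵢcᵢeᵢ. Then: (i) the map p₀ := z + b/c is constant on D, so |z(u,v) − p₀| = 1/c for all (u,v) ∈ D; (ii) for any fixed (u₀,v₀) ∈ D, the vectors X, Y, N, b and z − z(u₀,v₀) remain in the fixed 4-dimensional linear subspace spanned by X(u₀,v₀), Y(u₀,v₀), N(u₀,v₀), b(u₀,v₀). Hence z is a surface lying on a three-dimensional sphere of radius 1/c in a four-dimensional affine subspace of ℝ^{n+1}, and its principal curvatures with respect to the normal N are ν and −ν, so it is a minimal surface in that three-sphere. -/
open Real Set
open scoped RealInnerProductSpace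

noncomputable section

variable {F : Type*} [NormedAddCommGroup F] [NormedSpace ℝ F]

theorem fderiv_eq_zero_of_pu_pv {f : ℝ × ℝ → F} {p : ℝ × ℝ}
    (hf : DifferentiableAt ℝ f p) (h1 : pu f p = 0) (h2 : pv f p = 0) :
    fderiv ℝ f p = 0 := by
  refine ContinuousLinearMap.ext fun w => ?_
  have hw : w = w.1 • ((1:ℝ), (0:ℝ)) + w.2 • ((0:ℝ), (1:ℝ)) := by
    ext <;> simp
  rw [ContinuousLinearMap.zero_apply, hw, map_add, map_smul, map_smul]
  rw [pu] at h1; rw [pv] at h2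
  rw [h1, h2, smul_zero, smul_zero, add_zero]

theorem const_on_of_fderiv_zero {D : Set (ℝ × ℝ)} (hD : IsOpen D) (hconn : IsPreconnected D)
    {f : ℝ × ℝ → F} (hf : ∀ p ∈ D, DifferentiableAt ℝ f p)
    (h0 : ∀ p ∈ D, fderiv ℝ f p = 0) :
    ∀ p ∈ D, ∀ q ∈ D, f p = f q := by
  have loc : ∀ q ∈ D, ∃ ε > 0, Metric.ball q ε ⊆ D ∧ ∀ x ∈ Metric.ball q ε, f x = f q := by
    intro q hq
    obtain ⟨ε, hε, hball⟩ := Metric.isOpen_iff.1 hD q hq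
    refine ⟨ε, hε, hball, fun x hx => ?_⟩
    have h := Convex.norm_image_sub_le_of_norm_fderiv_le' (φ := 0) (C := 0)
      (fun y hy => hf y (hball hy))
      (fun y hy => by simp [h0 y (hball hy)])
      (convex_ball q ε) (Metric.mem_ball_self hε) hx
    simpa [sub_eq_zero] using h
  intro p hp q hq
  set u : Set (ℝ × ℝ) :=
    {x | ∃ ε > 0, Metric.ball x ε ⊆ D ∧ ∀ y ∈ Metric.ball x ε, f y = f p} with hu
  set v : Set (ℝ × ℝ) :=
    {x | ∃ ε > 0, Metric.ball x ε ⊆ D ∧ (∀ y ∈ Metric.ball x ε, f y = f x) ∧ f x ≠ f p}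
    with hv
  have huo : IsOpen u := by
    apply Metric.isOpen_iff.2
    rintro x ⟨ε, hε, hbD, hcon⟩
    refine ⟨ε / 2, by linarith, fun y hy => ?_⟩
    have hsub : Metric.ball y (ε / 2) ⊆ Metric.ball x ε := by
      apply Metric.ball_subset_ball'
      have := Metric.mem_ball.1 hy
      linarith
    exact ⟨ε / 2, by linarith, hsub.trans hbD, fun z hz => hcon z (hsub hz)⟩
  have hvo : IsOpen v := by
    apply Metric.isOpen_iff.2
    rintro x ⟨ε, hε, hbD, hcon, hne⟩
    refine ⟨ε / 2, by linarith, fun y hy => ?_⟩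
    have hsub : Metric.ball y (ε / 2) ⊆ Metric.ball x ε := by
      apply Metric.ball_subset_ball'
      have := Metric.mem_ball.1 hy
      linarith
    have hyx : f y = f x := hcon y (Metric.ball_subset_ball (by linarith) hy)
    exact ⟨ε / 2, by linarith, hsub.trans hbD,
      fun z hz => (hcon z (hsub hz)).trans hyx.symm, hyx ▸ hne⟩
  have hcover : D ⊆ u ∪ v := by
    intro x hx
    obtain ⟨ε, hε, hbD, hcon⟩ := loc x hx
    by_cases hfx : f x = f p
    · exact Or.inl ⟨ε, hε, hbD, fun y hy => (hcon y hy).trans hfx⟩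
    · exact Or.inr ⟨ε, hε, hbD, hcon, hfx⟩
  have hpu' : p ∈ u := by
    obtain ⟨ε, hε, hbD, hcon⟩ := loc p hp
    exact ⟨ε, hε, hbD, hcon⟩
  have hdisj : ¬(D ∩ (u ∩ v)).Nonempty := by
    rintro ⟨x, _, ⟨ε, hε, _, hcon⟩, ⟨ε', hε', _, _, hne⟩⟩
    exact hne (hcon x (Metric.mem_ball_self hε))
  have : ¬(D ∩ v).Nonempty := fun hnv =>
    hdisj (hconn u v huo hvo hcover ⟨p, hp, hpu'⟩ hnv)
  have hqv : q ∈ u := by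
    rcases hcover hq with h | h
    · exact h
    · exact absurd ⟨q, hq, h⟩ this
  obtain ⟨ε, hε, _, hcon⟩ := hqv
  exact (hcon q (Metric.mem_ball_self hε)).symm

variable {E : Type*} [NormedAddCommGroup E] [InnerProductSpace ℝ E]

theorem hasFDerivAt_inner_const {f : ℝ × ℝ → E} {p : ℝ × ℝ} (w : E)
    (hf : DifferentiableAt ℝ f p) :
    HasFDerivAt (fun q => ⟪w, f q⟫) ((innerSL ℝ w).comp (fderiv ℝ f p)) p :=
  ((innerSL ℝ w).hasFDerivAt).comp p hf.hasFDerivAt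

theorem diff_inner_const {f : ℝ × ℝ → E} {p : ℝ × ℝ} (w : E)
    (hf : DifferentiableAt ℝ f p) :
    DifferentiableAt ℝ (fun q => ⟪w, f q⟫) p :=
  (hasFDerivAt_inner_const w hf).differentiableAt

theorem pu_inner_const {f : ℝ × ℝ → E} {p : ℝ × ℝ} (w : E)
    (hf : DifferentiableAt ℝ f p) :
    pu (fun q => ⟪w, f q⟫) p = ⟪w, pu f p⟫ := by
  rw [pu, (hasFDerivAt_inner_const w hf).fderiv]; rfl

theorem pv_inner_const {f : ℝ × ℝ → E} {p : ℝ × ℝ} (w : E)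
    (hf : DifferentiableAt ℝ f p) :
    pv (fun q => ⟪w, f q⟫) p = ⟪w, pv f p⟫ := by
  rw [pv, (hasFDerivAt_inner_const w hf).fderiv]; rfl

theorem pu_mul {f g : ℝ × ℝ → ℝ} {p : ℝ × ℝ}
    (hf : DifferentiableAt ℝ f p) (hg : DifferentiableAt ℝ g p) :
    pu (fun q => f q * g q) p = f p * pu g p + g p * pu f p := by
  rw [pu, (hf.hasFDerivAt.fun_mul hg.hasFDerivAt).fderiv]
  simp [pu]

theorem pv_mul {f g : ℝ × ℝ → ℝ} {p : ℝ × ℝ}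
    (hf : DifferentiableAt ℝ f p) (hg : DifferentiableAt ℝ g p) :
    pv (fun q => f q * g q) p = f p * pv g p + g p * pv f p := by
  rw [pv, (hf.hasFDerivAt.fun_mul hg.hasFDerivAt).fderiv]
  simp [pv]

theorem pu_add {f g : ℝ × ℝ → F} {p : ℝ × ℝ}
    (hf : DifferentiableAt ℝ f p) (hg : DifferentiableAt ℝ g p) :
    pu (fun q => f q + g q) p = pu f p + pu g p := by
  rw [pu, fderiv_fun_add hf hg]; rfl

theorem pv_add {f g : ℝ × ℝ → F} {p : ℝ × ℝ}
    (hf : DifferentiableAt ℝ f p) (hg : DifferentiableAt ℝ g p) :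
    pv (fun q => f q + g q) p = pv f p + pv g p := by
  rw [pv, fderiv_fun_add hf hg]; rfl

theorem pu_const_smul {f : ℝ × ℝ → F} {p : ℝ × ℝ} (a : ℝ)
    (hf : DifferentiableAt ℝ f p) :
    pu (fun q => a • f q) p = a • pu f p := by
  rw [pu, fderiv_fun_const_smul hf]; rfl

theorem pv_const_smul {f : ℝ × ℝ → F} {p : ℝ × ℝ} (a : ℝ)
    (hf : DifferentiableAt ℝ f p) :
    pv (fun q => a • f q) p = a • pv f p := by
  rw [pv, fderiv_fun_const_smul hf]; rfl
theorem pu_const_mul {f : ℝ × ℝ → ℝ} {p : ℝ × ℝ} (a : ℝ)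
    (hf : DifferentiableAt ℝ f p) :
    pu (fun q => a * f q) p = a * pu f p := by
  simpa [smul_eq_mul] using pu_const_smul (F := ℝ) a hf

theorem pv_const_mul {f : ℝ × ℝ → ℝ} {p : ℝ × ℝ} (a : ℝ)
    (hf : DifferentiableAt ℝ f p) :
    pv (fun q => a * f q) p = a * pv f p := by
  simpa [smul_eq_mul] using pv_const_smul (F := ℝ) a hf

theorem pu_smul_fun {c : ℝ × ℝ → ℝ} {f : ℝ × ℝ → F} {p : ℝ × ℝ}
    (hc : DifferentiableAt ℝ c p) (hf : DifferentiableAt ℝ f p) :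
    pu (fun q => c q • f q) p = c p • pu f p + (pu c p) • f p := by
  rw [pu, (hc.hasFDerivAt.fun_smul hf.hasFDerivAt).fderiv]
  simp [pu]

theorem pv_smul_fun {c : ℝ × ℝ → ℝ} {f : ℝ × ℝ → F} {p : ℝ × ℝ}
    (hc : DifferentiableAt ℝ c p) (hf : DifferentiableAt ℝ f p) :
    pv (fun q => c q • f q) p = c p • pv f p + (pv c p) • f p := by
  rw [pv, (hc.hasFDerivAt.fun_smul hf.hasFDerivAt).fderiv]
  simp [pv]

theorem pu_quad {A B C S' : ℝ × ℝ → ℝ} {t : ℝ} {p : ℝ × ℝ}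
    (hA : DifferentiableAt ℝ A p) (hB : DifferentiableAt ℝ B p)
    (hC : DifferentiableAt ℝ C p) (hS : DifferentiableAt ℝ S' p) :
    pu (fun r => A r * A r + B r * B r + C r * C r + t * (S' r * S' r)) p
      = 2 * A p * pu A p + 2 * B p * pu B p + 2 * C p * pu C p
        + t * (2 * S' p * pu S' p) := by
  have h := ((((hA.hasFDerivAt.fun_mul hA.hasFDerivAt).fun_add
    (hB.hasFDerivAt.fun_mul hB.hasFDerivAt)).fun_add
    (hC.hasFDerivAt.fun_mul hC.hasFDerivAt)).fun_add
    ((hS.hasFDerivAt.fun_mul hS.hasFDerivAt).const_mul t))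
  rw [pu, h.fderiv]
  simp [pu]
  ring

theorem pv_quad {A B C S' : ℝ × ℝ → ℝ} {t : ℝ} {p : ℝ × ℝ}
    (hA : DifferentiableAt ℝ A p) (hB : DifferentiableAt ℝ B p)
    (hC : DifferentiableAt ℝ C p) (hS : DifferentiableAt ℝ S' p) :
    pv (fun r => A r * A r + B r * B r + C r * C r + t * (S' r * S' r)) p
      = 2 * A p * pv A p + 2 * B p * pv B p + 2 * C p * pv C p
        + t * (2 * S' p * pv S' p) := by
  have h := ((((hA.hasFDerivAt.fun_mul hA.hasFDerivAt).fun_add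
    (hB.hasFDerivAt.fun_mul hB.hasFDerivAt)).fun_add
    (hC.hasFDerivAt.fun_mul hC.hasFDerivAt)).fun_add
    ((hS.hasFDerivAt.fun_mul hS.hasFDerivAt).const_mul t))
  rw [pv, h.fderiv]
  simp [pv]
  ring



set_option maxHeartbeats 2000000 in
/-- Case `∑ cᵢ² > 0` of the description of integral surfaces of the distribution `Δ` of a
minimal hypersurface of type number two with involutive distribution: the surface `z` lies
on a three-dimensional sphere of radius `1/c` in a four-dimensional affine subspace of
`ℝ^{n+1}`, with principal curvatures `ν` and `-ν` with respect to `N`. -/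
theorem minimal_case_c_positive
    (n : ℕ) (hn : 3 ≤ n)
    (D : Set (ℝ × ℝ)) (hD : IsOpen D) (hconn : IsConnected D)
    (z X Y N : ℝ × ℝ → EuclideanSpace ℝ (Fin (n + 1)))
    (e : Fin (n - 2) → ℝ × ℝ → EuclideanSpace ℝ (Fin (n + 1)))
    (Ec Gc γ₁ γ₂ ν : ℝ × ℝ → ℝ) (c : Fin (n - 2) → ℝ)
    (hz : ContDiffOn ℝ (⊤ : ℕ∞) z D) (hX : ContDiffOn ℝ (⊤ : ℕ∞) X D) (hY : ContDiffOn ℝ (⊤ : ℕ∞) Y D)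
    (hN : ContDiffOn ℝ (⊤ : ℕ∞) N D) (he : ∀ i, ContDiffOn ℝ (⊤ : ℕ∞) (e i) D)
    (hEc : ContDiffOn ℝ (⊤ : ℕ∞) Ec D) (hGc : ContDiffOn ℝ (⊤ : ℕ∞) Gc D)
    (hγ₁ : ContDiffOn ℝ (⊤ : ℕ∞) γ₁ D) (hγ₂ : ContDiffOn ℝ (⊤ : ℕ∞) γ₂ D)
    (hν : ContDiffOn ℝ (⊤ : ℕ∞) ν D)
    (hEpos : ∀ p ∈ D, 0 < Ec p) (hGpos : ∀ p ∈ D, 0 < Gc p)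
    (hνpos : ∀ p ∈ D, 0 < ν p)
    (hc : 0 < ∑ i, c i ^ 2)
    (horth : OrthFrame n D X Y N e)
    (hzu : ∀ p ∈ D, pu z p = Real.sqrt (Ec p) • X p)
    (hzv : ∀ p ∈ D, pv z p = Real.sqrt (Gc p) • Y p)
    (hXu : ∀ p ∈ D, pu X p =
      Real.sqrt (Ec p) • (γ₁ p • Y p + (∑ i, c i • e i p) + ν p • N p))
    (hYu : ∀ p ∈ D, pu Y p = -(Real.sqrt (Ec p) * γ₁ p) • X p)
    (heu : ∀ p ∈ D, ∀ i, pu (e i) p = -(Real.sqrt (Ec p) * c i) • X p)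
    (hNu : ∀ p ∈ D, pu N p = -(Real.sqrt (Ec p) * ν p) • X p)
    (hXv : ∀ p ∈ D, pv X p = (Real.sqrt (Gc p) * γ₂ p) • Y p)
    (hYv : ∀ p ∈ D, pv Y p =
      Real.sqrt (Gc p) • ((-(γ₂ p)) • X p + (∑ i, c i • e i p) - ν p • N p))
    (hev : ∀ p ∈ D, ∀ i, pv (e i) p = -(Real.sqrt (Gc p) * c i) • Y p)
    (hNv : ∀ p ∈ D, pv N p = (Real.sqrt (Gc p) * ν p) • Y p) :
    -- with `c = √(∑ cᵢ²)` and `b = (1/c) ∑ cᵢ eᵢ`: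
    (let cn : ℝ := Real.sqrt (∑ i, c i ^ 2)
     let b : ℝ × ℝ → EuclideanSpace ℝ (Fin (n + 1)) := fun p => cn⁻¹ • ∑ i, c i • e i p
     let cent : ℝ × ℝ → EuclideanSpace ℝ (Fin (n + 1)) := fun p => z p + cn⁻¹ • b p
     -- (i): the center `p₀ = z + b/c` is constant on `D`, and `z` stays at distance `1/c`
     (∀ p ∈ D, ∀ q ∈ D, cent p = cent q) ∧
     (∀ p ∈ D, ∀ q ∈ D, ‖z p - cent q‖ = 1 / cn) ∧
     -- (ii): `X`, `Y`, `N`, `b` and `z - z(u₀,v₀)` stay in the fixed four-dimensional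
     -- subspace spanned by `X(u₀,v₀)`, `Y(u₀,v₀)`, `N(u₀,v₀)`, `b(u₀,v₀)`
     (∀ p₀ ∈ D, ∀ p ∈ D,
       X p ∈ Submodule.span ℝ
           ({X p₀, Y p₀, N p₀, b p₀} : Set (EuclideanSpace ℝ (Fin (n + 1)))) ∧
       Y p ∈ Submodule.span ℝ
           ({X p₀, Y p₀, N p₀, b p₀} : Set (EuclideanSpace ℝ (Fin (n + 1)))) ∧
       N p ∈ Submodule.span ℝ
           ({X p₀, Y p₀, N p₀, b p₀} : Set (EuclideanSpace ℝ (Fin (n + 1)))) ∧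
       b p ∈ Submodule.span ℝ
           ({X p₀, Y p₀, N p₀, b p₀} : Set (EuclideanSpace ℝ (Fin (n + 1)))) ∧
       z p - z p₀ ∈ Submodule.span ℝ
           ({X p₀, Y p₀, N p₀, b p₀} : Set (EuclideanSpace ℝ (Fin (n + 1))))) ∧
     -- (iii): the second fundamental form of `z` with respect to `N` is diagonal with
     -- `z_uu·N = Eν`, `z_vv·N = -Gν`, `z_uv·N = 0`; so the principal curvatures are `±ν`
     (∀ p ∈ D,
       ⟪pu (pu z) p, N p⟫ / Ec p = ν p ∧
       ⟪pv (pv z) p, N p⟫ / Gc p = -ν p ∧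
       ⟪pv (pu z) p, N p⟫ = 0)) := by
  intro cn b cent
  have hcndef : cn = Real.sqrt (∑ i, c i ^ 2) := rfl
  have hbdef : ∀ p, b p = cn⁻¹ • ∑ i, c i • e i p := fun _ => rfl
  have hcentdef : ∀ p, cent p = z p + cn⁻¹ • b p := fun _ => rfl
  have hcnpos : 0 < cn := Real.sqrt_pos.2 hc
  have hcn0 : cn ≠ 0 := ne_of_gt hcnpos
  have hKcn : cn * cn = ∑ i, c i ^ 2 := Real.mul_self_sqrt hc.le
  -- differentiability
  have hzd : ∀ q ∈ D, DifferentiableAt ℝ z q := fun q hq =>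
    (hz.contDiffAt (hD.mem_nhds hq)).differentiableAt (by simp)
  have hXd : ∀ q ∈ D, DifferentiableAt ℝ X q := fun q hq =>
    (hX.contDiffAt (hD.mem_nhds hq)).differentiableAt (by simp)
  have hYd : ∀ q ∈ D, DifferentiableAt ℝ Y q := fun q hq =>
    (hY.contDiffAt (hD.mem_nhds hq)).differentiableAt (by simp)
  have hNd : ∀ q ∈ D, DifferentiableAt ℝ N q := fun q hq =>
    (hN.contDiffAt (hD.mem_nhds hq)).differentiableAt (by simp)
  have hed : ∀ i, ∀ q ∈ D, DifferentiableAt ℝ (e i) q := fun i q hq =>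
    ((he i).contDiffAt (hD.mem_nhds hq)).differentiableAt (by simp)
  have hSd : ∀ q ∈ D, DifferentiableAt ℝ (fun r => ∑ i, c i • e i r) q := fun q hq =>
    DifferentiableAt.fun_sum fun i _ => (hed i q hq).fun_const_smul (c i)
  -- derivatives of the sum S = ∑ cᵢ eᵢ
  have hSu : ∀ q ∈ D, pu (fun r => ∑ i, c i • e i r) q
      = -(Real.sqrt (Ec q) * (∑ i, c i ^ 2)) • X q := by
    intro q hq
    have hh : HasFDerivAt (fun r => ∑ i, c i • e i r) (∑ i, c i • fderiv ℝ (e i) q) q :=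
      HasFDerivAt.fun_sum fun i _ => (hed i q hq).hasFDerivAt.fun_const_smul (c i)
    rw [pu, hh.fderiv, ContinuousLinearMap.sum_apply]
    calc (∑ i, (c i • fderiv ℝ (e i) q) (1, 0))
        = ∑ i, (c i * -(Real.sqrt (Ec q) * c i)) • X q := by
          refine Finset.sum_congr rfl fun i _ => ?_
          rw [ContinuousLinearMap.smul_apply]
          show c i • pu (e i) q = _
          rw [heu q hq i, smul_smul]
      _ = (∑ i, (c i * -(Real.sqrt (Ec q) * c i))) • X q := by rw [Finset.sum_smul]
      _ = -(Real.sqrt (Ec q) * (∑ i, c i ^ 2)) • X q := by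
          congr 1
          rw [Finset.mul_sum, ← Finset.sum_neg_distrib]
          exact Finset.sum_congr rfl fun i _ => by ring
  have hSv : ∀ q ∈ D, pv (fun r => ∑ i, c i • e i r) q
      = -(Real.sqrt (Gc q) * (∑ i, c i ^ 2)) • Y q := by
    intro q hq
    have hh : HasFDerivAt (fun r => ∑ i, c i • e i r) (∑ i, c i • fderiv ℝ (e i) q) q :=
      HasFDerivAt.fun_sum fun i _ => (hed i q hq).hasFDerivAt.fun_const_smul (c i)
    rw [pv, hh.fderiv, ContinuousLinearMap.sum_apply]
    calc (∑ i, (c i • fderiv ℝ (e i) q) (0, 1))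
        = ∑ i, (c i * -(Real.sqrt (Gc q) * c i)) • Y q := by
          refine Finset.sum_congr rfl fun i _ => ?_
          rw [ContinuousLinearMap.smul_apply]
          show c i • pv (e i) q = _
          rw [hev q hq i, smul_smul]
      _ = (∑ i, (c i * -(Real.sqrt (Gc q) * c i))) • Y q := by rw [Finset.sum_smul]
      _ = -(Real.sqrt (Gc q) * (∑ i, c i ^ 2)) • Y q := by
          congr 1
          rw [Finset.mul_sum, ← Finset.sum_neg_distrib]
          exact Finset.sum_congr rfl fun i _ => by ring
  -- inner product facts
  have hwS : ∀ (w : EuclideanSpace ℝ (Fin (n + 1))) (q : ℝ × ℝ), (∀ i, ⟪w, e i q⟫ = 0) →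
      ⟪w, ∑ i, c i • e i q⟫ = 0 := by
    intro w q hw
    rw [inner_sum]
    refine Finset.sum_eq_zero fun i _ => ?_
    rw [real_inner_smul_right, hw i, mul_zero]
  have hSN : ∀ q ∈ D, ⟪(∑ i, c i • e i q : EuclideanSpace ℝ (Fin (n + 1))), N q⟫ = 0 := by
    intro q hq
    rw [real_inner_comm]
    exact hwS (N q) q fun i => ((horth q hq).2.2.2.2.2.2.1 i).2.2.2
  have hSS : ∀ q ∈ D, ⟪(∑ i, c i • e i q : EuclideanSpace ℝ (Fin (n + 1))),
      ∑ i, c i • e i q⟫ = ∑ i, c i ^ 2 := by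
    intro q hq
    obtain ⟨-, -, -, -, -, -, hi, hij⟩ := horth q hq
    calc ⟪(∑ i, c i • e i q : EuclideanSpace ℝ (Fin (n + 1))), ∑ j, c j • e j q⟫
        = ∑ j, c j * ∑ i, c i * ⟪e i q, e j q⟫ := by
          rw [inner_sum]
          refine Finset.sum_congr rfl fun j _ => ?_
          rw [real_inner_smul_right, sum_inner]
          congr 1
          exact Finset.sum_congr rfl fun i _ => by rw [real_inner_smul_left]
      _ = ∑ j, c j ^ 2 := by
          refine Finset.sum_congr rfl fun j _ => ?_
          rw [Finset.sum_eq_single j (fun i _ hne => by rw [hij i j hne, mul_zero])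
            (fun h => absurd (Finset.mem_univ j) h), (hi j).1, mul_one, pow_two]
  have hnormS : ∀ q ∈ D, ‖(∑ i, c i • e i q : EuclideanSpace ℝ (Fin (n + 1)))‖ = cn := by
    intro q hq
    have h2 : ‖(∑ i, c i • e i q : EuclideanSpace ℝ (Fin (n + 1)))‖ ^ 2 = cn ^ 2 := by
      rw [← real_inner_self_eq_norm_sq, hSS q hq, pow_two, hKcn]
    calc ‖(∑ i, c i • e i q : EuclideanSpace ℝ (Fin (n + 1)))‖
        = Real.sqrt (‖(∑ i, c i • e i q : EuclideanSpace ℝ (Fin (n + 1)))‖ ^ 2) :=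
          (Real.sqrt_sq (norm_nonneg _)).symm
      _ = Real.sqrt (cn ^ 2) := by rw [h2]
      _ = cn := Real.sqrt_sq hcnpos.le
  -- Part (i): the center is constant
  have hcentd : ∀ q ∈ D,
      DifferentiableAt ℝ (fun r => z r + (cn⁻¹ * cn⁻¹) • ∑ i, c i • e i r) q :=
    fun q hq => (hzd q hq).add ((hSd q hq).fun_const_smul _)
  have hcent_const : ∀ p ∈ D, ∀ q ∈ D,
      z p + (cn⁻¹ * cn⁻¹) • ∑ i, c i • e i p = z q + (cn⁻¹ * cn⁻¹) • ∑ i, c i • e i q := by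
    refine const_on_of_fderiv_zero hD hconn.isPreconnected hcentd ?_
    intro q hq
    refine fderiv_eq_zero_of_pu_pv (hcentd q hq) ?_ ?_
    · rw [pu_add (hzd q hq) ((hSd q hq).fun_const_smul _), hzu q hq,
        pu_const_smul _ (hSd q hq), hSu q hq, smul_smul]
      have hco : cn⁻¹ * cn⁻¹ * -(Real.sqrt (Ec q) * ∑ i, c i ^ 2) = -Real.sqrt (Ec q) := by
        rw [← hKcn]; field_simp
      rw [hco, ← add_smul]
      simp
    · rw [pv_add (hzd q hq) ((hSd q hq).fun_const_smul _), hzv q hq,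
        pv_const_smul _ (hSd q hq), hSv q hq, smul_smul]
      have hco : cn⁻¹ * cn⁻¹ * -(Real.sqrt (Gc q) * ∑ i, c i ^ 2) = -Real.sqrt (Gc q) := by
        rw [← hKcn]; field_simp
      rw [hco, ← add_smul]
      simp
  have hcent_eq : ∀ p, cent p = z p + (cn⁻¹ * cn⁻¹) • ∑ i, c i • e i p := by
    intro p
    rw [hcentdef, hbdef, smul_smul]
  have part1 : ∀ p ∈ D, ∀ q ∈ D, cent p = cent q := by
    intro p hp q hq
    rw [hcent_eq, hcent_eq]
    exact hcent_const p hp q hq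
  refine ⟨part1, ?_, ?_, ?_⟩
  · -- Part (i)(b): distance to the center
    intro p hp q hq
    rw [← part1 p hp q hq, hcent_eq]
    have : z p - (z p + (cn⁻¹ * cn⁻¹) • ∑ i, c i • e i p)
        = -((cn⁻¹ * cn⁻¹) • ∑ i, c i • e i p) := by abel
    rw [this, norm_neg, norm_smul, hnormS p hp, Real.norm_eq_abs, abs_mul,
      abs_inv, abs_of_pos hcnpos]
    field_simp
  · -- Part (ii)
    intro p₀ hp₀ p hp
    set Vs : Set (EuclideanSpace ℝ (Fin (n + 1))) := {X p₀, Y p₀, N p₀, b p₀} with hVs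
    set V : Submodule ℝ (EuclideanSpace ℝ (Fin (n + 1))) := Submodule.span ℝ Vs with hV
    have key : ∀ w : EuclideanSpace ℝ (Fin (n + 1)), ⟪w, X p₀⟫ = 0 → ⟪w, Y p₀⟫ = 0 →
        ⟪w, N p₀⟫ = 0 → ⟪w, ∑ i, c i • e i p₀⟫ = 0 →
        ∀ q ∈ D, ⟪w, X q⟫ = 0 ∧ ⟪w, Y q⟫ = 0 ∧ ⟪w, N q⟫ = 0 ∧
          ⟪w, ∑ i, c i • e i q⟫ = 0 ∧ ⟪w, z q - z p₀⟫ = 0 := by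
      intro w hwX hwY hwN hwSum
      have hFd : ∀ q ∈ D, DifferentiableAt ℝ (fun r =>
          ⟪w, X r⟫ * ⟪w, X r⟫ + ⟪w, Y r⟫ * ⟪w, Y r⟫ + ⟪w, N r⟫ * ⟪w, N r⟫ +
          (cn⁻¹ * cn⁻¹) * (⟪w, ∑ i, c i • e i r⟫ * ⟪w, ∑ i, c i • e i r⟫)) q := by
        intro q hq
        exact ((((diff_inner_const w (hXd q hq)).mul (diff_inner_const w (hXd q hq))).add
          ((diff_inner_const w (hYd q hq)).mul (diff_inner_const w (hYd q hq)))).add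
          ((diff_inner_const w (hNd q hq)).mul (diff_inner_const w (hNd q hq)))).add
          (((diff_inner_const w (hSd q hq)).mul (diff_inner_const w (hSd q hq))).const_mul _)
      have hF0 : ∀ q ∈ D, fderiv ℝ (fun r =>
          ⟪w, X r⟫ * ⟪w, X r⟫ + ⟪w, Y r⟫ * ⟪w, Y r⟫ + ⟪w, N r⟫ * ⟪w, N r⟫ +
          (cn⁻¹ * cn⁻¹) * (⟪w, ∑ i, c i • e i r⟫ * ⟪w, ∑ i, c i • e i r⟫)) q = 0 := by
        intro q hq
        have hwXu : ⟪w, pu X q⟫ = Real.sqrt (Ec q) *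
            (γ₁ q * ⟪w, Y q⟫ + ⟪w, ∑ i, c i • e i q⟫ + ν q * ⟪w, N q⟫) := by
          rw [hXu q hq, real_inner_smul_right, inner_add_right, inner_add_right,
            real_inner_smul_right, real_inner_smul_right]
        have hwYu : ⟪w, pu Y q⟫ = -(Real.sqrt (Ec q) * γ₁ q) * ⟪w, X q⟫ := by
          rw [hYu q hq, real_inner_smul_right]
        have hwNu : ⟪w, pu N q⟫ = -(Real.sqrt (Ec q) * ν q) * ⟪w, X q⟫ := by
          rw [hNu q hq, real_inner_smul_right]
        have hwSu : ⟪w, pu (fun r => ∑ i, c i • e i r) q⟫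
            = -(Real.sqrt (Ec q) * (cn * cn)) * ⟪w, X q⟫ := by
          rw [hSu q hq, real_inner_smul_right, hKcn]
        have hwXv : ⟪w, pv X q⟫ = (Real.sqrt (Gc q) * γ₂ q) * ⟪w, Y q⟫ := by
          rw [hXv q hq, real_inner_smul_right]
        have hwYv : ⟪w, pv Y q⟫ = Real.sqrt (Gc q) *
            (-(γ₂ q) * ⟪w, X q⟫ + ⟪w, ∑ i, c i • e i q⟫ - ν q * ⟪w, N q⟫) := by
          rw [hYv q hq, real_inner_smul_right, inner_sub_right, inner_add_right,
            real_inner_smul_right, real_inner_smul_right]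
        have hwNv : ⟪w, pv N q⟫ = (Real.sqrt (Gc q) * ν q) * ⟪w, Y q⟫ := by
          rw [hNv q hq, real_inner_smul_right]
        have hwSv : ⟪w, pv (fun r => ∑ i, c i • e i r) q⟫
            = -(Real.sqrt (Gc q) * (cn * cn)) * ⟪w, Y q⟫ := by
          rw [hSv q hq, real_inner_smul_right, hKcn]
        refine fderiv_eq_zero_of_pu_pv (hFd q hq) ?_ ?_
        · rw [pu_quad (diff_inner_const w (hXd q hq)) (diff_inner_const w (hYd q hq))
            (diff_inner_const w (hNd q hq)) (diff_inner_const w (hSd q hq)),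
            pu_inner_const w (hXd q hq), pu_inner_const w (hYd q hq),
            pu_inner_const w (hNd q hq), pu_inner_const w (hSd q hq),
            hwXu, hwYu, hwNu, hwSu]
          field_simp
          ring
        · rw [pv_quad (diff_inner_const w (hXd q hq)) (diff_inner_const w (hYd q hq))
            (diff_inner_const w (hNd q hq)) (diff_inner_const w (hSd q hq)),
            pv_inner_const w (hXd q hq), pv_inner_const w (hYd q hq),
            pv_inner_const w (hNd q hq), pv_inner_const w (hSd q hq),
            hwXv, hwYv, hwNv, hwSv]
          field_simp
          ring
      have hFconst := const_on_of_fderiv_zero hD hconn.isPreconnected hFd hF0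
      have main4 : ∀ q ∈ D, ⟪w, X q⟫ = 0 ∧ ⟪w, Y q⟫ = 0 ∧ ⟪w, N q⟫ = 0 ∧
          ⟪w, ∑ i, c i • e i q⟫ = 0 := by
        intro q hq
        have hFq := hFconst q hq p₀ hp₀
        simp only [hwX, hwY, hwN, hwSum, mul_zero, zero_mul, add_zero, zero_add] at hFq
        have ht : 0 < cn⁻¹ * cn⁻¹ := mul_pos (inv_pos.2 hcnpos) (inv_pos.2 hcnpos)
        have h4 : (0:ℝ) ≤ (cn⁻¹ * cn⁻¹) * (⟪w, ∑ i, c i • e i q⟫ * ⟪w, ∑ i, c i • e i q⟫) :=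
          mul_nonneg ht.le (mul_self_nonneg _)
        refine ⟨mul_self_eq_zero.1 ?_, mul_self_eq_zero.1 ?_, mul_self_eq_zero.1 ?_,
          mul_self_eq_zero.1 ?_⟩
        · nlinarith [mul_self_nonneg ⟪w, Y q⟫, mul_self_nonneg ⟪w, N q⟫, h4]
        · nlinarith [mul_self_nonneg ⟪w, X q⟫, mul_self_nonneg ⟪w, N q⟫, h4]
        · nlinarith [mul_self_nonneg ⟪w, X q⟫, mul_self_nonneg ⟪w, Y q⟫, h4]
        · have hs : (cn⁻¹ * cn⁻¹) * (⟪w, ∑ i, c i • e i q⟫ * ⟪w, ∑ i, c i • e i q⟫) = 0 := by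
            nlinarith [mul_self_nonneg ⟪w, X q⟫, mul_self_nonneg ⟪w, Y q⟫,
              mul_self_nonneg ⟪w, N q⟫, h4]
          have := (mul_eq_zero.1 hs).resolve_left (ne_of_gt ht)
          exact this
      have hzw := const_on_of_fderiv_zero hD hconn.isPreconnected
        (fun q hq => diff_inner_const w (hzd q hq)) (fun q hq => by
          refine fderiv_eq_zero_of_pu_pv (diff_inner_const w (hzd q hq)) ?_ ?_
          · rw [pu_inner_const w (hzd q hq), hzu q hq, real_inner_smul_right,
              (main4 q hq).1, mul_zero]
          · rw [pv_inner_const w (hzd q hq), hzv q hq, real_inner_smul_right,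
              (main4 q hq).2.1, mul_zero])
      intro q hq
      refine ⟨(main4 q hq).1, (main4 q hq).2.1, (main4 q hq).2.2.1, (main4 q hq).2.2.2, ?_⟩
      rw [inner_sub_right, hzw q hq p₀ hp₀, sub_self]
    -- extracting orthogonality data from membership in Vᗮ
    have hw4 : ∀ w ∈ Vᗮ, ⟪w, X p₀⟫ = 0 ∧ ⟪w, Y p₀⟫ = 0 ∧ ⟪w, N p₀⟫ = 0 ∧
        ⟪w, ∑ i, c i • e i p₀⟫ = 0 := by
      intro w hw
      have hmem := (Submodule.mem_orthogonal V w).1 hw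
      have h1 : ⟪w, X p₀⟫ = 0 := by
        rw [real_inner_comm]
        exact hmem _ (Submodule.subset_span (by simp [hVs]))
      have h2 : ⟪w, Y p₀⟫ = 0 := by
        rw [real_inner_comm]
        exact hmem _ (Submodule.subset_span (by simp [hVs]))
      have h3 : ⟪w, N p₀⟫ = 0 := by
        rw [real_inner_comm]
        exact hmem _ (Submodule.subset_span (by simp [hVs]))
      have hb : ⟪w, b p₀⟫ = 0 := by
        rw [real_inner_comm]
        exact hmem _ (Submodule.subset_span (by simp [hVs]))
      have hsum_eq : (∑ i, c i • e i p₀) = cn • b p₀ := by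
        rw [hbdef, smul_smul, mul_inv_cancel₀ hcn0, one_smul]
      have h4 : ⟪w, ∑ i, c i • e i p₀⟫ = 0 := by
        rw [hsum_eq, real_inner_smul_right, hb, mul_zero]
      exact ⟨h1, h2, h3, h4⟩
    have hmemV : ∀ m : EuclideanSpace ℝ (Fin (n + 1)),
        (∀ w ∈ Vᗮ, ⟪w, m⟫ = 0) → m ∈ V := by
      intro m hm
      have : m ∈ Vᗮᗮ := (Submodule.mem_orthogonal Vᗮ m).2 hm
      rwa [Submodule.orthogonal_orthogonal] at this
    refine ⟨?_, ?_, ?_, ?_, ?_⟩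
    · refine hmemV _ fun w hw => ?_
      obtain ⟨h1, h2, h3, h4⟩ := hw4 w hw
      exact (key w h1 h2 h3 h4 p hp).1
    · refine hmemV _ fun w hw => ?_
      obtain ⟨h1, h2, h3, h4⟩ := hw4 w hw
      exact (key w h1 h2 h3 h4 p hp).2.1
    · refine hmemV _ fun w hw => ?_
      obtain ⟨h1, h2, h3, h4⟩ := hw4 w hw
      exact (key w h1 h2 h3 h4 p hp).2.2.1
    · refine hmemV _ fun w hw => ?_
      obtain ⟨h1, h2, h3, h4⟩ := hw4 w hw
      rw [hbdef, real_inner_smul_right, (key w h1 h2 h3 h4 p hp).2.2.2.1, mul_zero]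
    · refine hmemV _ fun w hw => ?_
      obtain ⟨h1, h2, h3, h4⟩ := hw4 w hw
      exact (key w h1 h2 h3 h4 p hp).2.2.2.2

  · -- Part (iii)
    intro q hq
    obtain ⟨hXX, hYY, hNN, hXY, hXN, hYN, hi, hij⟩ := horth q hq
    have hEd : DifferentiableAt ℝ Ec q :=
      (hEc.contDiffAt (hD.mem_nhds hq)).differentiableAt (by simp)
    have hGd : DifferentiableAt ℝ Gc q :=
      (hGc.contDiffAt (hD.mem_nhds hq)).differentiableAt (by simp)
    have hsE : DifferentiableAt ℝ (fun r => Real.sqrt (Ec r)) q :=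
      hEd.sqrt (ne_of_gt (hEpos q hq))
    have hsG : DifferentiableAt ℝ (fun r => Real.sqrt (Gc r)) q :=
      hGd.sqrt (ne_of_gt (hGpos q hq))
    have hequ : (pu z) =ᶠ[nhds q] (fun r => Real.sqrt (Ec r) • X r) :=
      Filter.eventuallyEq_of_mem (hD.mem_nhds hq) fun r hr => hzu r hr
    have heqv : (pv z) =ᶠ[nhds q] (fun r => Real.sqrt (Gc r) • Y r) :=
      Filter.eventuallyEq_of_mem (hD.mem_nhds hq) fun r hr => hzv r hr
    have hpuu : pu (pu z) q
        = Real.sqrt (Ec q) • pu X q + (pu (fun r => Real.sqrt (Ec r)) q) • X q := by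
      rw [pu, hequ.fderiv_eq, ← pu, pu_smul_fun hsE (hXd q hq)]
    have hpvu : pv (pu z) q
        = Real.sqrt (Ec q) • pv X q + (pv (fun r => Real.sqrt (Ec r)) q) • X q := by
      rw [pv, hequ.fderiv_eq, ← pv, pv_smul_fun hsE (hXd q hq)]
    have hpvv : pv (pv z) q
        = Real.sqrt (Gc q) • pv Y q + (pv (fun r => Real.sqrt (Gc r)) q) • Y q := by
      rw [pv, heqv.fderiv_eq, ← pv, pv_smul_fun hsG (hYd q hq)]
    have hXuN : ⟪pu X q, N q⟫ = Real.sqrt (Ec q) * ν q := by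
      rw [hXu q hq, real_inner_smul_left, inner_add_left, inner_add_left,
        real_inner_smul_left, real_inner_smul_left, hYN, hSN q hq, hNN]
      ring
    have hYvN : ⟪pv Y q, N q⟫ = -(Real.sqrt (Gc q) * ν q) := by
      rw [hYv q hq, real_inner_smul_left, inner_sub_left, inner_add_left,
        real_inner_smul_left, real_inner_smul_left, hXN, hSN q hq, hNN]
      ring
    have hXvN : ⟪pv X q, N q⟫ = 0 := by
      rw [hXv q hq, real_inner_smul_left, hYN, mul_zero]
    refine ⟨?_, ?_, ?_⟩
    · rw [hpuu, inner_add_left, real_inner_smul_left, real_inner_smul_left, hXuN, hXN,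
        mul_zero, add_zero, ← mul_assoc, Real.mul_self_sqrt (hEpos q hq).le]
      exact mul_div_cancel_left₀ _ (ne_of_gt (hEpos q hq))
    · rw [hpvv, inner_add_left, real_inner_smul_left, real_inner_smul_left, hYvN, hYN,
        mul_zero, add_zero, mul_neg, ← mul_assoc, Real.mul_self_sqrt (hGpos q hq).le,
        neg_div]
      rw [mul_div_cancel_left₀ _ (ne_of_gt (hGpos q hq))]
    · rw [hpvu, inner_add_left, real_inner_smul_left, real_inner_smul_left, hXvN, hXN]
      ring
end
end
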